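/- (Hessian identity for finite mixtures.) Let E be a finite-dimensional real normed vector space, K a positive integer, ρ_1,…,ρ_K > 0, and f_1,…,f_K : E → ℝ everywhere strictly positive and twice differentiable. Define p = ∑_{k=1}^K ρ_k·f_k, the local weights w_k(h) = ρ_k·f_k(h)/p(h), and the score b(h) = ∇(log ∘ p)(h). Then for every h ∈ E, the Hessian of log p satisfies ∇²(log ∘ p)(h) = ∑_{k=1}^K w_k(h) · [ ∇²(log ∘ f_k)(h) + ∇(log ∘ f_k)(h) ⊗ ∇(log ∘ f_k)(h) ] − b(h) ⊗ b(h), where u ⊗ v denotes the bilinear form (x,y) ↦ ⟨u,x⟩·⟨v,y⟩ (equivalently the outer product u·vᵀ in coordinates). -/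

import Mathlib

/-! For nonvanishing `g`, differentiating the score `∇(log g) = ∇g / g` once more gives
`∇²(log g) + ∇(log g) ⊗ ∇(log g) = ∇²g / g`. Applied to `p` this expresses `∇²(log p)` through
`∇²p / p = ∑ ρ_k ∇²f_k / p`, and applied to each `f_k` it rewrites
`ρ_k ∇²f_k / p = w_k ∇²f_k / f_k` as `w_k [∇²(log f_k) + ∇(log f_k) ⊗ ∇(log f_k)]`. -/

section LogHessian

variable {E F : Type*} [NormedAddCommGroup E] [NormedSpace ℝ E]
  [NormedAddCommGroup F] [NormedSpace ℝ F]

theorem fderiv_sum_smul {ι : Type*} {s : Finset ι} (c : ι → ℝ) {f : ι → E → F} {x : E}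
    (hf : ∀ k ∈ s, DifferentiableAt ℝ (f k) x) :
    fderiv ℝ (fun y => ∑ k ∈ s, c k • f k y) x = ∑ k ∈ s, c k • fderiv ℝ (f k) x :=
  (HasFDerivAt.fun_sum fun k hk => (hf k hk).hasFDerivAt.const_smul (c k)).fderiv

theorem fderiv_fderiv_log_add_smulRight {g : E → ℝ} (hg : Differentiable ℝ g)
    (hg0 : ∀ x, g x ≠ 0) {h : E} (hg2 : DifferentiableAt ℝ (fderiv ℝ g) h) :
    fderiv ℝ (fderiv ℝ (fun x => Real.log (g x))) h
        + (fderiv ℝ (fun x => Real.log (g x)) h).smulRight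
            (fderiv ℝ (fun x => Real.log (g x)) h)
      = (g h)⁻¹ • fderiv ℝ (fderiv ℝ g) h := by
  have hscore : fderiv ℝ (fun x => Real.log (g x)) = fun x => (g x)⁻¹ • fderiv ℝ g x :=
    funext fun x => fderiv.log (hg x) (hg0 x)
  have hinv : HasFDerivAt (fun x => (g x)⁻¹) (-((g h) ^ 2)⁻¹ • fderiv ℝ g h) h :=
    (hasDerivAt_inv (hg0 h)).comp_hasFDerivAt h (hg h).hasFDerivAt
  rw [hscore, (hinv.fun_smul hg2.hasFDerivAt).fderiv]
  ext v w
  simp only [add_apply, smul_apply, ContinuousLinearMap.smulRight_apply, smul_eq_mul]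
  field_simp [hg0 h]
  ring

end LogHessian

theorem mixture_hessian_identity_general (E : Type*) [NormedAddCommGroup E]
    [NormedSpace ℝ E]
    (K : ℕ) (hK : 0 < K) (ρ : Fin K → ℝ) (hρ : ∀ k, 0 < ρ k)
    (f : Fin K → E → ℝ) (hfpos : ∀ k x, 0 < f k x)
    (hfdiff : ∀ k, Differentiable ℝ (f k))
    (hfdiff2 : ∀ k, Differentiable ℝ (fderiv ℝ (f k))) :
    ∀ h : E,
      fderiv ℝ (fderiv ℝ (fun x => Real.log (∑ k, ρ k * f k x))) h
        = (∑ k, (ρ k * f k h / (∑ j, ρ j * f j h)) •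
              (fderiv ℝ (fderiv ℝ (fun x => Real.log (f k x))) h
                + (fderiv ℝ (fun x => Real.log (f k x)) h).smulRight
                    (fderiv ℝ (fun x => Real.log (f k x)) h)))
          - (fderiv ℝ (fun x => Real.log (∑ k, ρ k * f k x)) h).smulRight
              (fderiv ℝ (fun x => Real.log (∑ k, ρ k * f k x)) h) := by
  intro h
  set p : E → ℝ := fun x => ∑ k, ρ k * f k x
  have hpos : ∀ x, 0 < p x := fun x =>
    Finset.sum_pos (fun k _ => mul_pos (hρ k) (hfpos k x)) ⟨⟨0, hK⟩, Finset.mem_univ _⟩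
  have hpdiff : Differentiable ℝ p :=
    Differentiable.fun_sum fun k _ => (hfdiff k).const_mul (ρ k)
  have hDp : fderiv ℝ p = fun x => ∑ k, ρ k • fderiv ℝ (f k) x :=
    funext fun x => fderiv_sum_smul ρ fun k _ => hfdiff k x
  have hp2 : DifferentiableAt ℝ (fderiv ℝ p) h := by
    rw [hDp]
    fun_prop
  have hD2p : fderiv ℝ (fderiv ℝ p) h = ∑ k, ρ k • fderiv ℝ (fderiv ℝ (f k)) h := by
    rw [hDp]
    exact fderiv_sum_smul ρ fun k _ => hfdiff2 k h
  have hlogp := fderiv_fderiv_log_add_smulRight hpdiff (fun x => (hpos x).ne') hp2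
  rw [eq_sub_of_add_eq hlogp, hD2p, Finset.smul_sum]
  congr 1
  refine Finset.sum_congr rfl fun k _ => ?_
  rw [fderiv_fderiv_log_add_smulRight (hfdiff k) (fun x => (hfpos k x).ne') (hfdiff2 k h),
    smul_smul, smul_smul]
  congr 1
  change (p h)⁻¹ * ρ k = ρ k * f k h / p h * (f k h)⁻¹
  field_simp [(hfpos k h).ne', (hpos h).ne']

/-- **Hessian identity for finite mixtures.** For everywhere strictly positive,
twice differentiable `f_1,…,f_K : E → ℝ` and weights `ρ_k > 0`, the Hessian of
the log of the mixture `p = ∑_k ρ_k f_k` satisfies, with local weights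
`w_k(h) = ρ_k f_k(h)/p(h)` and score `b(h) = ∇(log p)(h)`,
`∇²(log p)(h) = ∑_k w_k(h)[∇²(log f_k)(h) + ∇(log f_k)(h) ⊗ ∇(log f_k)(h)]
  − b(h) ⊗ b(h)`,
where `u ⊗ v` is the bilinear form `(x,y) ↦ u(x)·v(y)` (realized via
`ContinuousLinearMap.smulRight`). -/
theorem mixture_hessian_identity (E : Type*) [NormedAddCommGroup E]
    [NormedSpace ℝ E] [FiniteDimensional ℝ E]
    (K : ℕ) (hK : 0 < K) (ρ : Fin K → ℝ) (hρ : ∀ k, 0 < ρ k)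
    (f : Fin K → E → ℝ) (hfpos : ∀ k x, 0 < f k x)
    (hfdiff : ∀ k, Differentiable ℝ (f k))
    (hfdiff2 : ∀ k, Differentiable ℝ (fderiv ℝ (f k))) :
    ∀ h : E,
      fderiv ℝ (fderiv ℝ (fun x => Real.log (∑ k, ρ k * f k x))) h
        = (∑ k, (ρ k * f k h / (∑ j, ρ j * f j h)) •
              (fderiv ℝ (fderiv ℝ (fun x => Real.log (f k x))) h
                + (fderiv ℝ (fun x => Real.log (f k x)) h).smulRight
                    (fderiv ℝ (fun x => Real.log (f k x)) h)))
          - (fderiv ℝ (fun x => Real.log (∑ k, ρ k * f k x)) h).smulRight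
              (fderiv ℝ (fun x => Real.log (∑ k, ρ k * f k x)) h) :=
  mixture_hessian_identity_general E K hK ρ hρ f hfpos hfdiff hfdiff2
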